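/- Every positive eigenvalue of the adjacency matrix of a threshold graph is strictly greater than (−1+√2)/2. -/

import Mathlib

/-!
A threshold graph always has an isolated or a dominating vertex (one of minimal, resp. maximal,
weight), so its vertices can be deleted one at a time. Let `A x = μ x` with
`0 < μ ≤ (√2 - 1) / 2`. On the set `B` of vertices not yet deleted, the eigenvalue equation reads
`μ x i = ∑_{j ∈ B, j ~ i} x j + T`, where `T` is the sum of `x` over the dominating vertices deleted
so far. Deleting a vertex changes `(s, T)`, with `s = ∑_{i ∈ B} x i`, by a linear map, and the
ratio `T / s` by the Möbius map `r ↦ μ r / (μ - r)` (isolated vertex) or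
`r ↦ (1 + (μ + 2) r) / (μ - r)` (dominating vertex). Both maps send the set
`(-∞, -1] ∪ [μ t / (μ - t), 0] ∪ [t, ∞)`, which avoids the pole `μ`, into itself as soon as
`μ (1 + 2 t + 2 t²) ≤ t`; the best choice `t = √2 / 2` gives exactly `μ ≤ (√2 - 1) / 2`.
The initial ratio is `0`, and when no vertex is left `s = 0`; so the pair `(s, T)` is `(0, 0)`
throughout, and then every deleted `x v` vanishes.
-/

/-- A graph is a threshold graph if adjacency is determined by vertex weights
exceeding a threshold. -/
def SimpleGraph.IsThreshold {V : Type*} (G : SimpleGraph V) : Prop :=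
  ∃ (S : ℝ) (w : V → ℝ), ∀ u v : V, u ≠ v → (G.Adj u v ↔ S < w u + w v)

/-- `μ` is an eigenvalue of the adjacency matrix of `G`. -/
def SimpleGraph.HasAdjEigenvalue {V : Type*} [Fintype V] (G : SimpleGraph V) (μ : ℝ) : Prop :=
  letI := Classical.decEq V
  letI : DecidableRel G.Adj := Classical.decRel _
  ∃ x : V → ℝ, x ≠ 0 ∧ (G.adjMatrix ℝ).mulVec x = μ • x

section Ratios

open Set

variable {μ t r : ℝ}

noncomputable def ratioAfterIsolated (μ r : ℝ) : ℝ := μ * r / (μ - r)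

noncomputable def ratioAfterDominating (μ r : ℝ) : ℝ := (1 + (μ + 2) * r) / (μ - r)

noncomputable def goodRatios (μ t : ℝ) : Set ℝ :=
  Iic (-1) ∪ Icc (ratioAfterIsolated μ t) 0 ∪ Ici t

lemma ratioAfterIsolated_le_iff (hμt : μ < t) :
    ratioAfterIsolated μ t ≤ r ↔ r * (μ - t) ≤ μ * t :=
  div_le_iff_of_neg (by linarith)

lemma mem_goodRatios_iff (hμt : μ < t) :
    r ∈ goodRatios μ t ↔ r ≤ -1 ∨ (r * (μ - t) ≤ μ * t ∧ r ≤ 0) ∨ t ≤ r := by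
  simp only [goodRatios, mem_union, mem_Iic, mem_Icc, mem_Ici, ratioAfterIsolated_le_iff hμt,
    or_assoc]

lemma ne_of_mem_goodRatios (hμ : 0 < μ) (hμt : μ < t) (hr : r ∈ goodRatios μ t) : r ≠ μ := by
  rw [mem_goodRatios_iff hμt] at hr
  rintro rfl
  rcases hr with h | ⟨-, h⟩ | h <;> linarith

lemma ratioAfterIsolated_mem_goodRatios (hμ : 0 < μ) (hμt : μ < t) (hr : r ∈ goodRatios μ t) :
    ratioAfterIsolated μ r ∈ goodRatios μ t := by
  rw [mem_goodRatios_iff hμt] at hr ⊢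
  refine Or.inr (Or.inl ?_)
  rw [ratioAfterIsolated, div_mul_eq_mul_div]
  have hμ2 := mul_pos hμ hμ
  obtain hr | hr : r ≤ 0 ∨ t ≤ r := by
    rcases hr with hr | ⟨-, hr⟩ | hr
    exacts [Or.inl (by linarith), Or.inl hr, Or.inr hr]
  · rw [div_le_iff₀ (by linarith)]
    exact ⟨by nlinarith, div_nonpos_of_nonpos_of_nonneg (by nlinarith) (by linarith)⟩
  · rw [div_le_iff_of_neg (by linarith)]
    exact ⟨by nlinarith, div_nonpos_of_nonneg_of_nonpos (by nlinarith) (by linarith)⟩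

lemma lt_of_mul_quadratic_le (hμ : 0 < μ) (hcrit : μ * (1 + 2 * t + 2 * t ^ 2) ≤ t) : μ < t := by
  have ht : 0 < t := by nlinarith [sq_nonneg (2 * t + 1)]
  nlinarith

lemma ratioAfterDominating_mem_goodRatios (hμ : 0 < μ) (hcrit : μ * (1 + 2 * t + 2 * t ^ 2) ≤ t)
    (hr : r ∈ goodRatios μ t) : ratioAfterDominating μ r ∈ goodRatios μ t := by
  have hμt := lt_of_mul_quadratic_le hμ hcrit
  rw [mem_goodRatios_iff hμt] at hr ⊢
  unfold ratioAfterDominating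
  rcases hr with hr | ⟨hr, hr0⟩ | hr
  · left
    rw [div_le_iff₀ (by linarith)]; nlinarith
  · right; right
    rw [le_div_iff₀ (by linarith)]; nlinarith
  · left
    rw [div_le_iff_of_neg (by linarith)]; nlinarith

lemma zero_mem_goodRatios (hμ : 0 < μ) (hμt : μ < t) : 0 ∈ goodRatios μ t := by
  rw [mem_goodRatios_iff hμt]
  exact Or.inr (Or.inl ⟨by nlinarith, le_rfl⟩)

end Ratios

def GoodPair (μ t s T : ℝ) : Prop := s = 0 ∧ T = 0 ∨ s ≠ 0 ∧ ∃ r ∈ goodRatios μ t, T = r * s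

namespace GoodPair

variable {μ t s T x : ℝ}

lemma eq_zero_of_left_eq_zero (h : GoodPair μ t 0 T) : T = 0 := by
  rcases h with ⟨-, h⟩ | ⟨h, -⟩
  exacts [h, absurd rfl h]

lemma zero_right (hμ : 0 < μ) (hμt : μ < t) (s : ℝ) : GoodPair μ t s 0 := by
  by_cases hs : s = 0
  · exact Or.inl ⟨hs, rfl⟩
  · exact Or.inr ⟨hs, 0, zero_mem_goodRatios hμ hμt, by ring⟩

lemma sub_of_mul_eq (hμ : 0 < μ) (hμt : μ < t) (h : GoodPair μ t s T) (hx : μ * x = T) :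
    GoodPair μ t (s - x) T := by
  rcases h with ⟨rfl, rfl⟩ | ⟨hs, r, hr, rfl⟩
  · left; simpa [hμ.ne'] using hx
  have hrμ : μ - r ≠ 0 := sub_ne_zero.2 (ne_of_mem_goodRatios hμ hμt hr).symm
  have hsx : s - x = s * (μ - r) / μ := by
    rw [eq_div_iff hμ.ne']; linear_combination -hx
  refine Or.inr ⟨by rw [hsx]; positivity, _, ratioAfterIsolated_mem_goodRatios hμ hμt hr, ?_⟩
  rw [hsx, ratioAfterIsolated]
  field_simp

lemma sub_add_of_mul_eq (hμ : 0 < μ) (hcrit : μ * (1 + 2 * t + 2 * t ^ 2) ≤ t)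
    (h : GoodPair μ t s T) (hx : μ * x = s - x + T) :
    GoodPair μ t (s - x) (T + x) := by
  have hμt := lt_of_mul_quadratic_le hμ hcrit
  have hμ1 : μ + 1 ≠ 0 := by linarith
  rcases h with ⟨rfl, rfl⟩ | ⟨hs, r, hr, rfl⟩
  · left
    have : (μ + 1) * x = 0 := by linarith
    simpa [hμ1] using this
  have hrμ : μ - r ≠ 0 := sub_ne_zero.2 (ne_of_mem_goodRatios hμ hμt hr).symm
  have hsx : s - x = s * (μ - r) / (μ + 1) := by
    rw [eq_div_iff hμ1]; linear_combination -hx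
  have hTx : r * s + x = s * (1 + (μ + 2) * r) / (μ + 1) := by
    rw [eq_div_iff hμ1]; linear_combination hx
  refine Or.inr ⟨by rw [hsx]; positivity, _, ratioAfterDominating_mem_goodRatios hμ hcrit hr, ?_⟩
  rw [hsx, hTx, ratioAfterDominating]
  field_simp

end GoodPair

namespace SimpleGraph

variable {V : Type*} {G : SimpleGraph V}

lemma IsThreshold.exists_isolated_or_dominating (hG : G.IsThreshold) {A : Finset V}
    (hA : A.Nonempty) : ∃ v ∈ A, (∀ u ∈ A, ¬G.Adj v u) ∨ ∀ u ∈ A, u ≠ v → G.Adj v u := by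
  obtain ⟨S, w, hw⟩ := hG
  obtain ⟨vmin, hvmin, hmin⟩ := A.exists_min_image w hA
  obtain ⟨vmax, hvmax, hmax⟩ := A.exists_max_image w hA
  by_cases hiso : ∀ u ∈ A, ¬G.Adj vmin u
  · exact ⟨vmin, hvmin, Or.inl hiso⟩
  push Not at hiso
  obtain ⟨u₀, hu₀, hadj⟩ := hiso
  have hS := (hw _ _ hadj.ne).1 hadj
  refine ⟨vmax, hvmax, Or.inr fun u hu hne => (hw _ _ hne.symm).2 ?_⟩
  linarith [hmin u hu, hmax u₀ hu₀]

variable [DecidableRel G.Adj] {μ t : ℝ} {x : V → ℝ}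

lemma sum_ite_adj_eq_sum_erase_add [DecidableEq V] {A : Finset V} {v : V} (hv : v ∈ A) (i : V) :
    ∑ j ∈ A, (if G.Adj i j then x j else 0) =
      ∑ j ∈ A.erase v, (if G.Adj i j then x j else 0) + if G.Adj i v then x v else 0 :=
  (A.sum_erase_add _ hv).symm

theorem IsThreshold.eq_zero_of_goodPair [DecidableEq V] (hG : G.IsThreshold) (hμ : 0 < μ)
    (hcrit : μ * (1 + 2 * t + 2 * t ^ 2) ≤ t) (A : Finset V) (T : ℝ)
    (hx : ∀ i ∈ A, μ * x i = ∑ j ∈ A, (if G.Adj i j then x j else 0) + T)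
    (hgood : GoodPair μ t (∑ i ∈ A, x i) T) : T = 0 ∧ ∀ i ∈ A, x i = 0 := by
  induction A using Finset.strongInduction generalizing T with
  | H A ih =>
  rcases A.eq_empty_or_nonempty with rfl | hA
  · exact ⟨GoodPair.eq_zero_of_left_eq_zero (by simpa using hgood), by simp⟩
  obtain ⟨v, hv, hiso | hdom⟩ := hG.exists_isolated_or_dominating hA
  all_goals
    have hsum : ∑ i ∈ A.erase v, x i = ∑ i ∈ A, x i - x v := Finset.sum_erase_eq_sub hv
    have hzero_of : x v = 0 → (∀ i ∈ A.erase v, x i = 0) → ∀ i ∈ A, x i = 0 :=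
      fun hv0 hrest i hi => if h : i = v then h ▸ hv0 else hrest i (Finset.mem_erase.2 ⟨h, hi⟩)
  · have hxv : μ * x v = T := by
      simpa [Finset.sum_eq_zero fun j hj => if_neg (hiso j hj)] using hx v hv
    have hx' : ∀ i ∈ A.erase v, μ * x i = ∑ j ∈ A.erase v, (if G.Adj i j then x j else 0) + T := by
      intro i hi
      have hvi : ¬G.Adj i v := fun h => hiso i (Finset.mem_of_mem_erase hi) h.symm
      simpa [sum_ite_adj_eq_sum_erase_add hv i, hvi] using hx i (Finset.mem_of_mem_erase hi)
    obtain ⟨hT, hrest⟩ := ih _ (Finset.erase_ssubset hv) T hx'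
      (hsum ▸ hgood.sub_of_mul_eq hμ (lt_of_mul_quadratic_le hμ hcrit) hxv)
    subst hT
    exact ⟨rfl, hzero_of (by simpa [hμ.ne'] using hxv) hrest⟩
  · have hxv : μ * x v = ∑ i ∈ A, x i - x v + T := by
      have : ∀ j ∈ A.erase v, (if G.Adj v j then x j else 0) = x j :=
        fun j hj => if_pos (hdom j (Finset.mem_of_mem_erase hj) (Finset.ne_of_mem_erase hj))
      simpa [sum_ite_adj_eq_sum_erase_add hv v, Finset.sum_congr rfl this, hsum] using hx v hv
    have hx' : ∀ i ∈ A.erase v,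
        μ * x i = ∑ j ∈ A.erase v, (if G.Adj i j then x j else 0) + (T + x v) := by
      intro i hi
      have hvi : G.Adj i v := (hdom i (Finset.mem_of_mem_erase hi) (Finset.ne_of_mem_erase hi)).symm
      rw [hx i (Finset.mem_of_mem_erase hi), sum_ite_adj_eq_sum_erase_add hv i, if_pos hvi]
      ring
    obtain ⟨hT, hrest⟩ := ih _ (Finset.erase_ssubset hv) (T + x v) hx'
      (hsum ▸ hgood.sub_add_of_mul_eq hμ hcrit hxv)
    have hs : ∑ i ∈ A, x i - x v = 0 := hsum ▸ Finset.sum_eq_zero hrest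
    have hv0 : (μ + 1) * x v = 0 := by linarith
    replace hv0 : x v = 0 := (mul_eq_zero.1 hv0).resolve_left (by linarith)
    exact ⟨by linarith, hzero_of hv0 hrest⟩

end SimpleGraph

theorem threshold_positive_eigenvalue_gt {V : Type*} [Fintype V]
    (G : SimpleGraph V) (hG : G.IsThreshold) (μ : ℝ) (hμ : G.HasAdjEigenvalue μ)
    (hpos : 0 < μ) : (-1 + Real.sqrt 2) / 2 < μ := by
  classical
  obtain ⟨x, hx0, hxe⟩ := hμ
  by_contra! hle
  have hcrit : μ * (1 + 2 * (√2 / 2) + 2 * (√2 / 2) ^ 2) ≤ √2 / 2 := by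
    have h2 : √2 ^ 2 = 2 := Real.sq_sqrt zero_le_two
    nlinarith [Real.sqrt_nonneg 2]
  have hx : ∀ i ∈ Finset.univ, μ * x i = ∑ j, (if G.Adj i j then x j else 0) + 0 := by
    intro i _
    rw [add_zero, ← Finset.sum_filter, ← SimpleGraph.neighborFinset_eq_filter,
      ← SimpleGraph.adjMatrix_mulVec_apply, hxe, Pi.smul_apply, smul_eq_mul]
  obtain ⟨-, hzero⟩ := hG.eq_zero_of_goodPair hpos hcrit Finset.univ 0 hx
    (GoodPair.zero_right hpos (lt_of_mul_quadratic_le hpos hcrit) _)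
  exact hx0 (funext fun i => hzero i (Finset.mem_univ i))
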